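/- arXiv:1509.08285 — 2 statements merged into one kernel-verified Lean document; each statement's English description precedes it below -/
import Mathlib

section
/- Let T be a terrain, C a finite cover of T, and e an edge of T. If g ∈ C and g' ∈ C are both left-guards of e, then g = g'. Likewise, if g ∈ C and g' ∈ C are both right-guards of e, then g = g'. Hence a critical edge has at most one left-guard and at most one right-guard. -/
open Set

/-- A terrain: `n ≥ 2` vertices `v 0, …, v (n-1)` in `ℝ²` with strictly
increasing `x`-coordinates. -/
structure Terrain where
  n : ℕ
  hn : 2 ≤ n
  v : ℕ → ℝ × ℝ
  mono : ∀ i j : ℕ, i < j → j < n → (v i).1 < (v j).1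

namespace Terrain

/-- The edge `e_i = [v_i, v_{i+1}]` (meaningful for `i + 1 < n`). -/
def edge (T : Terrain) (i : ℕ) : Set (ℝ × ℝ) := segment ℝ (T.v i) (T.v (i + 1))

/-- The terrain as a subset of `ℝ²`: the union of its edges. -/
def carrier (T : Terrain) : Set (ℝ × ℝ) := ⋃ i ∈ Finset.range (T.n - 1), T.edge i

/-- The interior of the edge `e_i`: the edge minus its two endpoints. -/
def intEdge (T : Terrain) (i : ℕ) : Set (ℝ × ℝ) := T.edge i \ {T.v i, T.v (i + 1)}

/-- `p` sees `q` iff every point of the segment `[p, q]` is nowhere strictly below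
the terrain, i.e. every point of the segment lies on or above the terrain point
with the same `x`-coordinate. -/
def sees (T : Terrain) (p q : ℝ × ℝ) : Prop :=
  ∀ z ∈ segment ℝ p q, ∀ t ∈ T.carrier, t.1 = z.1 → t.2 ≤ z.2

/-- The visibility region `V(p) = {q ∈ T : p sees q}`. -/
def vis (T : Terrain) (p : ℝ × ℝ) : Set (ℝ × ℝ) := {q ∈ T.carrier | T.sees p q}

/-- `V(C) = ⋃_{g ∈ C} V(g)`. -/
def visSet (T : Terrain) (C : Set (ℝ × ℝ)) : Set (ℝ × ℝ) := ⋃ g ∈ C, T.vis g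

/-- `C ⊆ T` is a cover of the terrain iff `V(C) = T`. -/
def IsCover (T : Terrain) (C : Set (ℝ × ℝ)) : Prop :=
  C ⊆ T.carrier ∧ T.visSet C = T.carrier

/-- The vertex set `V = {v_1, …, v_n}`. -/
def vertexSet (T : Terrain) : Set (ℝ × ℝ) := {p | ∃ i < T.n, p = T.v i}

/-- Edge `e_i` is critical w.r.t. `g ∈ C`: `C \ {g}` covers some part of,
but not all of, `int(e_i)`. -/
def IsCriticalWrt (T : Terrain) (C : Set (ℝ × ℝ)) (g : ℝ × ℝ) (i : ℕ) : Prop :=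
  (T.visSet (C \ {g}) ∩ T.intEdge i).Nonempty ∧ ¬ T.intEdge i ⊆ T.visSet (C \ {g})

/-- `g` is a left-guard of `e_i`: `x(g) < x(v_i)` and `e_i` is critical w.r.t. `g`. -/
def IsLeftGuard (T : Terrain) (C : Set (ℝ × ℝ)) (g : ℝ × ℝ) (i : ℕ) : Prop :=
  g.1 < (T.v i).1 ∧ T.IsCriticalWrt C g i

/-- `g` is a right-guard of `e_i`: `x(v_{i+1}) < x(g)` and `e_i` is critical w.r.t. `g`. -/
def IsRightGuard (T : Terrain) (C : Set (ℝ × ℝ)) (g : ℝ × ℝ) (i : ℕ) : Prop :=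
  (T.v (i + 1)).1 < g.1 ∧ T.IsCriticalWrt C g i

/-- `q` is extremal in `V(p)`: `q ∈ V(p)` and `q` has maximal or minimal
`x`-coordinate within its connected component of `V(p)`. -/
def Extremal (T : Terrain) (p q : ℝ × ℝ) : Prop :=
  q ∈ T.vis p ∧
    ((∀ r ∈ connectedComponentIn (T.vis p) q, r.1 ≤ q.1) ∨
     (∀ r ∈ connectedComponentIn (T.vis p) q, q.1 ≤ r.1))

/-- The guard candidate set `U`: all vertices together with the extremal points
of the vertices' visibility regions. -/
def Uset (T : Terrain) : Set (ℝ × ℝ) :=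
  T.vertexSet ∪ ⋃ i ∈ Finset.range T.n, {q | T.Extremal (T.v i) q}

/-- `OPT(G, W)`: the minimum cardinality of a finite `C ⊆ G` with `W ⊆ V(C)`. -/
noncomputable def OPT (T : Terrain) (G W : Set (ℝ × ℝ)) : ℕ :=
  sInf {k | ∃ C : Finset (ℝ × ℝ), ↑C ⊆ G ∧ W ⊆ T.visSet ↑C ∧ C.card = k}

end Terrain

/-!
Let `a`, `b` be the endpoints of the edge. A point `w` left of `a` that sees an interior point
`q` of the edge lies on or above the line `ab`: the terrain point `a` is below the point of
`[w, q]` over it. Hence for a point `r` of the edge right of `q`, the segment `[w, r]` lies above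
the polygonal path `w q r`, which is nowhere below the terrain, so `w` sees `r`.

By criticality, each guard `g` of the edge has a private point `p` in the interior of the edge,
seen by `g` and by no other guard. If two distinct left-guards had private points `p`, `p'` with
`x(p) ≤ x(p')`, the guard of `p` would see `p'`. Right-guards are the mirror image.
-/

open AffineMap

/-- `(b.1 - a.1)` times the height of `p` above the line through `a` and `b`. -/
def lineExcess (a b p : ℝ × ℝ) : ℝ := (b.1 - a.1) * (p.2 - a.2) - (b.2 - a.2) * (p.1 - a.1)

section Plane

variable {a b p q z z' : ℝ × ℝ}

theorem lineExcess_lineMap (a b p q : ℝ × ℝ) (s : ℝ) :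
    lineExcess a b (lineMap p q s) = (1 - s) * lineExcess a b p + s * lineExcess a b q := by
  simp only [lineExcess, fst_lineMap, snd_lineMap, lineMap_apply_ring]
  ring

theorem lineExcess_eq_zero_of_mem_segment (hp : p ∈ segment ℝ a b) : lineExcess a b p = 0 := by
  rw [segment_eq_image_lineMap] at hp
  obtain ⟨s, -, rfl⟩ := hp
  rw [lineExcess_lineMap]
  simp only [lineExcess]
  ring

theorem lineExcess_le_lineExcess_iff (hab : a.1 < b.1) (hz : z.1 = z'.1) :
    lineExcess a b z ≤ lineExcess a b z' ↔ z.2 ≤ z'.2 := by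
  have h : lineExcess a b z' - lineExcess a b z = (b.1 - a.1) * (z'.2 - z.2) := by
    simp only [lineExcess, hz]
    ring
  rw [← sub_nonneg, h, mul_nonneg_iff_of_pos_left (sub_pos.2 hab), sub_nonneg]

theorem eq_of_mem_segment_of_fst_eq (hab : a.1 ≠ b.1) (hp : p ∈ segment ℝ a b)
    (hq : q ∈ segment ℝ a b) (h : p.1 = q.1) : p = q := by
  rw [segment_eq_image_lineMap] at hp hq
  obtain ⟨s, -, rfl⟩ := hp
  obtain ⟨t, -, rfl⟩ := hq
  rw [fst_lineMap, fst_lineMap, lineMap_apply_ring', lineMap_apply_ring'] at h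
  rw [mul_right_cancel₀ (sub_ne_zero.2 hab.symm) (add_right_cancel h)]

end Plane

namespace Terrain

variable (T : Terrain) {i j : ℕ} {c p q r w z z' : ℝ × ℝ}

def IsAbove (z : ℝ × ℝ) : Prop := ∀ t ∈ T.carrier, t.1 = z.1 → t.2 ≤ z.2

variable {T}

theorem IsAbove.of_le (h : T.IsAbove z) (hx : z.1 = z'.1) (hy : z.2 ≤ z'.2) : T.IsAbove z' :=
  fun t ht htz => (h t ht (htz.trans hx.symm)).trans hy

theorem fst_lt_fst (hij : i < j) (hj : j < T.n) : (T.v i).1 < (T.v j).1 := T.mono i j hij hj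

theorem fst_le_fst (hij : i ≤ j) (hj : j < T.n) : (T.v i).1 ≤ (T.v j).1 := by
  rcases hij.eq_or_lt with rfl | hij
  · rfl
  · exact (fst_lt_fst hij hj).le

theorem edge_subset_carrier (hi : i + 1 < T.n) : T.edge i ⊆ T.carrier :=
  subset_biUnion_of_mem (u := T.edge) (Finset.mem_coe.2 (Finset.mem_range.2 (by omega)))

theorem fst_mem_Icc_of_mem_edge (hi : i + 1 < T.n) (hp : p ∈ T.edge i) :
    p.1 ∈ Icc (T.v i).1 (T.v (i + 1)).1 := by
  rw [← segment_eq_Icc (fst_lt_fst i.lt_succ_self hi).le]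
  exact (Prod.segment_subset _ _ hp).1

theorem eq_of_mem_edge_of_fst_eq (hi : i + 1 < T.n) (hp : p ∈ T.edge i) (hq : q ∈ T.edge i)
    (h : p.1 = q.1) : p = q :=
  eq_of_mem_segment_of_fst_eq (fst_lt_fst i.lt_succ_self hi).ne hp hq h

theorem eq_of_mem_edge_of_mem_edge_of_fst_eq (hi : i + 1 < T.n) (hj : j + 1 < T.n)
    (hp : p ∈ T.edge i) (hq : q ∈ T.edge j) (h : p.1 = q.1) : p = q := by
  wlog hij : i ≤ j generalizing i j p q
  · exact (this hj hi hq hp h.symm (by omega)).symm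
  rcases hij.eq_or_lt with rfl | hij
  · exact eq_of_mem_edge_of_fst_eq hi hp hq h
  have hpx := (fst_mem_Icc_of_mem_edge hi hp).2
  have hqx := (fst_mem_Icc_of_mem_edge hj hq).1
  have hij' : (T.v (i + 1)).1 ≤ (T.v j).1 := fst_le_fst hij (by omega)
  obtain rfl : j = i + 1 := by
    by_contra hne
    linarith [fst_lt_fst (T := T) (show i + 1 < j by omega) (by omega)]
  rw [eq_of_mem_edge_of_fst_eq hi hp (right_mem_segment ℝ _ _) (by linarith),
    eq_of_mem_edge_of_fst_eq hj hq (left_mem_segment ℝ _ _) (by linarith)]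

theorem isAbove_of_mem_edge (hi : i + 1 < T.n) (hz : z ∈ T.edge i) : T.IsAbove z := by
  intro t ht htz
  obtain ⟨j, hj, htj⟩ := mem_iUnion₂.1 ht
  rw [eq_of_mem_edge_of_mem_edge_of_fst_eq (by simp at hj; omega) hi htj hz htz]

theorem fst_mem_Ioo_of_mem_intEdge (hi : i + 1 < T.n) (hq : q ∈ T.intEdge i) :
    q.1 ∈ Ioo (T.v i).1 (T.v (i + 1)).1 := by
  obtain ⟨hqe, hqv⟩ := hq
  obtain ⟨h₁, h₂⟩ := fst_mem_Icc_of_mem_edge hi hqe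
  refine ⟨h₁.lt_of_ne fun h => hqv (Or.inl ?_), h₂.lt_of_ne fun h => hqv (Or.inr ?_)⟩
  · exact eq_of_mem_edge_of_fst_eq hi hqe (left_mem_segment ℝ _ _) h.symm
  · exact eq_of_mem_edge_of_fst_eq hi hqe (right_mem_segment ℝ _ _) h

theorem lineExcess_nonneg_of_sees (hi : i + 1 < T.n) (hc : c ∈ T.edge i) (hq : q ∈ T.edge i)
    (hcx : c.1 ∈ openSegment ℝ w.1 q.1) (h : T.sees w q) :
    0 ≤ lineExcess (T.v i) (T.v (i + 1)) w := by
  rw [openSegment_eq_image_lineMap] at hcx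
  obtain ⟨ν, ⟨hν₀, hν₁⟩, hνc⟩ := hcx
  have hx : c.1 = (lineMap w q ν).1 := by rw [fst_lineMap, hνc]
  have hcz : c.2 ≤ (lineMap w q ν).2 :=
    h _ (lineMap_mem_segment ℝ w q ⟨hν₀.le, hν₁.le⟩) c (edge_subset_carrier hi hc) hx
  have hle := (lineExcess_le_lineExcess_iff (fst_lt_fst i.lt_succ_self hi) hx).2 hcz
  rw [lineExcess_eq_zero_of_mem_segment hc, lineExcess_lineMap,
    lineExcess_eq_zero_of_mem_segment hq] at hle
  nlinarith

theorem sees_of_sees_of_lineExcess_nonneg (hi : i + 1 < T.n) (hq : q ∈ T.edge i)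
    (hr : r ∈ T.edge i) (hw : 0 ≤ lineExcess (T.v i) (T.v (i + 1)) w)
    (hqr : q.1 ∈ segment ℝ w.1 r.1) (hwq : w.1 ≠ q.1) (h : T.sees w q) : T.sees w r := by
  have hab := fst_lt_fst i.lt_succ_self hi
  rw [segment_eq_image_lineMap] at hqr
  obtain ⟨μ, ⟨hμ₀, hμ₁⟩, hμq⟩ := hqr
  have hμ : 0 < μ := hμ₀.lt_of_ne (by rintro rfl; exact hwq (by simpa using hμq))
  rw [lineMap_apply_ring'] at hμq
  intro z hz
  rw [segment_eq_image_lineMap] at hz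
  obtain ⟨s, ⟨hs₀, hs₁⟩, rfl⟩ := hz
  have hz : lineExcess (T.v i) (T.v (i + 1)) (lineMap w r s) =
      (1 - s) * lineExcess (T.v i) (T.v (i + 1)) w := by
    rw [lineExcess_lineMap, lineExcess_eq_zero_of_mem_segment hr]
    ring
  change T.IsAbove _
  rcases le_or_gt s μ with hsμ | hμs
  · have hx : (lineMap w q (s / μ)).1 = (lineMap w r s).1 := by
      simp only [fst_lineMap, lineMap_apply_ring', ← hμq]
      field_simp
      ring
    have hs : s / μ ∈ Icc (0 : ℝ) 1 := ⟨by positivity, (div_le_one hμ).2 hsμ⟩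
    refine IsAbove.of_le (h _ (lineMap_mem_segment ℝ w q hs)) hx
      ((lineExcess_le_lineExcess_iff hab hx).1 ?_)
    rw [lineExcess_lineMap, lineExcess_eq_zero_of_mem_segment hq, hz]
    nlinarith [le_div_self hs₀ hμ hμ₁]
  · have hμne : 1 - μ ≠ 0 := by linarith
    set t := (s - μ) / (1 - μ)
    have ht : t ∈ Icc (0 : ℝ) 1 :=
      ⟨div_nonneg (by linarith) (by linarith), (div_le_one (by linarith)).2 (by linarith)⟩
    have hx : (lineMap q r t).1 = (lineMap w r s).1 := by
      simp only [t, fst_lineMap, lineMap_apply_ring', ← hμq]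
      field_simp
      ring
    have hedge : lineMap q r t ∈ T.edge i :=
      (convex_segment _ _).segment_subset hq hr (lineMap_mem_segment ℝ q r ht)
    refine (isAbove_of_mem_edge hi hedge).of_le hx ((lineExcess_le_lineExcess_iff hab hx).1 ?_)
    rw [lineExcess_eq_zero_of_mem_segment hedge, hz]
    exact mul_nonneg (by linarith) hw

theorem sees_of_sees_of_fst_lt (hi : i + 1 < T.n) (hw : w.1 < (T.v i).1) (hq : q ∈ T.intEdge i)
    (hr : r ∈ T.edge i) (hqr : q.1 ≤ r.1) (h : T.sees w q) : T.sees w r := by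
  have hq₁ := (fst_mem_Ioo_of_mem_intEdge hi hq).1
  refine sees_of_sees_of_lineExcess_nonneg hi hq.1 hr ?_ ?_ (by linarith) h
  · refine lineExcess_nonneg_of_sees hi (left_mem_segment ℝ _ _) hq.1 ?_ h
    rw [openSegment_eq_Ioo (by linarith)]
    exact ⟨hw, hq₁⟩
  · rw [segment_eq_Icc (by linarith)]
    exact ⟨by linarith, hqr⟩

theorem sees_of_sees_of_lt_fst (hi : i + 1 < T.n) (hw : (T.v (i + 1)).1 < w.1)
    (hq : q ∈ T.intEdge i) (hr : r ∈ T.edge i) (hrq : r.1 ≤ q.1) (h : T.sees w q) :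
    T.sees w r := by
  have hq₂ := (fst_mem_Ioo_of_mem_intEdge hi hq).2
  refine sees_of_sees_of_lineExcess_nonneg hi hq.1 hr ?_ ?_ (by linarith) h
  · refine lineExcess_nonneg_of_sees hi (right_mem_segment ℝ _ _) hq.1 ?_ h
    rw [openSegment_symm, openSegment_eq_Ioo (by linarith)]
    exact ⟨hq₂, hw⟩
  · rw [segment_symm, segment_eq_Icc (by linarith)]
    exact ⟨hrq, by linarith⟩

variable {C : Set (ℝ × ℝ)} {g g' : ℝ × ℝ}

theorem exists_mem_intEdge_sees_notMem_visSet (hC : T.IsCover C) (hi : i + 1 < T.n)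
    (h : T.IsCriticalWrt C g i) :
    ∃ p ∈ T.intEdge i, T.sees g p ∧ p ∉ T.visSet (C \ {g}) := by
  obtain ⟨p, hp, hpg⟩ := not_subset.1 h.2
  refine ⟨p, hp, ?_, hpg⟩
  have hpC : p ∈ T.visSet C := hC.2 ▸ edge_subset_carrier hi hp.1
  obtain ⟨u, hu, hup⟩ := mem_iUnion₂.1 hpC
  obtain rfl : u = g := by
    by_contra hug
    exact hpg (mem_iUnion₂.2 ⟨u, ⟨hu, hug⟩, hup⟩)
  exact hup.2

theorem eq_of_sees_of_notMem_visSet (hi : i + 1 < T.n) (hg : g ∈ C) (hp : p ∈ T.edge i)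
    (hgp : T.sees g p) (hp' : p ∉ T.visSet (C \ {g'})) : g = g' := by
  by_contra hne
  exact hp' (mem_iUnion₂.2 ⟨g, ⟨hg, hne⟩, edge_subset_carrier hi hp, hgp⟩)

theorem IsLeftGuard.eq (hC : T.IsCover C) (hi : i + 1 < T.n) (hg : g ∈ C) (hg' : g' ∈ C)
    (h : T.IsLeftGuard C g i) (h' : T.IsLeftGuard C g' i) : g = g' := by
  obtain ⟨p, hp, hgp, hpg⟩ := exists_mem_intEdge_sees_notMem_visSet hC hi h.2
  obtain ⟨p', hp', hgp', hpg'⟩ := exists_mem_intEdge_sees_notMem_visSet hC hi h'.2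
  rcases le_total p.1 p'.1 with hpp' | hp'p
  · exact eq_of_sees_of_notMem_visSet hi hg hp'.1
      (sees_of_sees_of_fst_lt hi h.1 hp hp'.1 hpp' hgp) hpg'
  · exact (eq_of_sees_of_notMem_visSet hi hg' hp.1
      (sees_of_sees_of_fst_lt hi h'.1 hp' hp.1 hp'p hgp') hpg).symm

theorem IsRightGuard.eq (hC : T.IsCover C) (hi : i + 1 < T.n) (hg : g ∈ C) (hg' : g' ∈ C)
    (h : T.IsRightGuard C g i) (h' : T.IsRightGuard C g' i) : g = g' := by
  obtain ⟨p, hp, hgp, hpg⟩ := exists_mem_intEdge_sees_notMem_visSet hC hi h.2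
  obtain ⟨p', hp', hgp', hpg'⟩ := exists_mem_intEdge_sees_notMem_visSet hC hi h'.2
  rcases le_total p'.1 p.1 with hp'p | hpp'
  · exact eq_of_sees_of_notMem_visSet hi hg hp'.1
      (sees_of_sees_of_lt_fst hi h.1 hp hp'.1 hp'p hgp) hpg'
  · exact (eq_of_sees_of_notMem_visSet hi hg' hp.1
      (sees_of_sees_of_lt_fst hi h'.1 hp' hp.1 hpp' hgp') hpg).symm

end Terrain

/-- A critical edge has at most one left-guard and at most one
right-guard: two left-guards (right-guards) of the same edge coincide. -/
theorem unique_left_and_right_guard (T : Terrain) (C : Finset (ℝ × ℝ))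
    (hC : T.IsCover ↑C) (i : ℕ) (hi : i + 1 < T.n) :
    (∀ g ∈ C, ∀ g' ∈ C, T.IsLeftGuard ↑C g i → T.IsLeftGuard ↑C g' i → g = g') ∧
    (∀ g ∈ C, ∀ g' ∈ C, T.IsRightGuard ↑C g i → T.IsRightGuard ↑C g' i → g = g') :=
  ⟨fun _ hg _ hg' => Terrain.IsLeftGuard.eq hC hi hg hg',
    fun _ hg _ hg' => Terrain.IsRightGuard.eq hC hi hg hg'⟩
end

section
/- Let T be a terrain and p ∈ T. Then the visibility region V(p) = {q ∈ T : p sees q} is a closed subset of ℝ². -/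
open Set

/-!
The terrain is compact and is the graph of a function over `[x(v_1), x(v_n)]`: the projection
to the `x`-axis maps it injectively onto that interval. Hence its epigraph
`{z | ∃ t ∈ T, x(t) = x(z) ∧ y(t) ≤ y(z)}` is closed (the compact terrain plus a closed vertical ray), and over
the interval "nowhere strictly below `T`" means "in the epigraph". For `p, q ∈ T` the segment
`[p, q]` lies over the interval, so `V(p) = T ∩ {q | [p, q] ⊆ epigraph}`, an intersection of
closed sets.
-/

theorem AffineMap.injOn_segment {𝕜 E F : Type*} [Field 𝕜] [LinearOrder 𝕜]
    [IsStrictOrderedRing 𝕜] [AddCommGroup E] [Module 𝕜 E] [AddCommGroup F] [Module 𝕜 F]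
    (f : E →ᵃ[𝕜] F) {u w : E} (h : f u ≠ f w) : InjOn f (segment 𝕜 u w) := by
  rw [segment_eq_image_lineMap]
  rintro _ ⟨s, -, rfl⟩ _ ⟨s', -, rfl⟩ hss'
  rw [AffineMap.apply_lineMap, AffineMap.apply_lineMap] at hss'
  rw [AffineMap.lineMap_injective 𝕜 h hss']

theorem image_fst_segment {𝕜 E F : Type*} [Field 𝕜] [LinearOrder 𝕜] [IsStrictOrderedRing 𝕜]
    [AddCommGroup E] [Module 𝕜 E] [AddCommGroup F] [Module 𝕜 F] (u w : E × F) :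
    Prod.fst '' segment 𝕜 u w = segment 𝕜 u.1 w.1 :=
  image_segment 𝕜 (LinearMap.fst 𝕜 E F).toAffineMap u w

theorem biUnion_range_succ_Icc {α : Type*} [LinearOrder α] {f : ℕ → α} {m : ℕ}
    (hf : MonotoneOn f (Iic (m + 1))) :
    ⋃ i ∈ Finset.range (m + 1), Icc (f i) (f (i + 1)) = Icc (f 0) (f (m + 1)) := by
  induction m with
  | zero => simp
  | succ m ih =>
    have hmono : ∀ {i j}, i ≤ j → j ≤ m + 2 → f i ≤ f j := fun hij hj =>
      hf (mem_Iic.2 (hij.trans hj)) (mem_Iic.2 hj) hij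
    rw [Finset.range_add_one, Finset.set_biUnion_insert,
      ih (hf.mono (Iic_subset_Iic.2 (by omega))), union_comm,
      Icc_union_Icc_eq_Icc (hmono (Nat.zero_le _) (by omega)) (hmono (by omega) le_rfl)]

open scoped Pointwise in
theorem isClosed_setOf_exists_fst_eq_snd_le {α β : Type*} [TopologicalSpace α] [AddGroup α]
    [IsTopologicalAddGroup α] [T1Space α] [TopologicalSpace β] [AddCommGroup β]
    [PartialOrder β] [IsOrderedAddMonoid β] [ClosedIciTopology β] [IsTopologicalAddGroup β]
    {K : Set (α × β)} (hK : IsCompact K) :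
    IsClosed {z : α × β | ∃ t ∈ K, t.1 = z.1 ∧ t.2 ≤ z.2} := by
  have hK' : {z : α × β | ∃ t ∈ K, t.1 = z.1 ∧ t.2 ≤ z.2} =
      K +ᵥ ({0} ×ˢ Ici 0 : Set (α × β)) := by
    ext z
    constructor
    · rintro ⟨t, ht, h1, h2⟩
      exact ⟨t, ht, (0, z.2 - t.2), ⟨rfl, sub_nonneg.2 h2⟩, Prod.ext (by simp [h1]) (by simp)⟩
    · rintro ⟨t, ht, y, ⟨hy1, hy2⟩, rfl⟩
      exact ⟨t, ht, by simp [mem_singleton_iff.1 hy1], le_add_of_nonneg_right hy2⟩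
  exact hK' ▸ (isClosed_singleton.prod isClosed_Ici).vadd_left_of_isCompact hK

theorem isClosed_setOf_segment_subset {E : Type*} [AddCommGroup E] [Module ℝ E]
    [TopologicalSpace E] [IsTopologicalAddGroup E] [ContinuousSMul ℝ E] {A : Set E}
    (hA : IsClosed A) (p : E) : IsClosed {q | segment ℝ p q ⊆ A} := by
  have hinter : {q | segment ℝ p q ⊆ A} =
      ⋂ θ ∈ Icc (0 : ℝ) 1, (fun q => AffineMap.lineMap p q θ) ⁻¹' A := by
    ext q
    simp only [mem_ofPred_eq, segment_eq_image_lineMap, image_subset_iff, mem_iInter₂]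
    rfl
  rw [hinter]
  exact isClosed_biInter fun θ _ =>
    hA.preimage (by simp only [AffineMap.lineMap_apply_module]; fun_prop)

namespace Terrain

variable (T : Terrain)

def epigraph : Set (ℝ × ℝ) := {z | ∃ t ∈ T.carrier, t.1 = z.1 ∧ t.2 ≤ z.2}

theorem strictMonoOn_fst_v : StrictMonoOn (fun i => (T.v i).1) (Iio T.n) :=
  fun i _ j hj hij => T.mono i j hij hj

theorem isCompact_carrier : IsCompact T.carrier :=
  (Finset.range (T.n - 1)).finite_toSet.isCompact_biUnion fun i _ => by
    rw [edge, ← convexHull_pair]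
    exact (toFinite _).isCompact_convexHull (𝕜 := ℝ)

theorem isClosed_epigraph : IsClosed T.epigraph :=
  isClosed_setOf_exists_fst_eq_snd_le T.isCompact_carrier

variable {T}

theorem image_fst_edge {i : ℕ} (hi : i + 1 < T.n) :
    Prod.fst '' T.edge i = Icc (T.v i).1 (T.v (i + 1)).1 := by
  rw [edge, image_fst_segment, segment_eq_Icc (T.mono i (i + 1) i.lt_succ_self hi).le]

theorem injOn_fst_edge {i : ℕ} (hi : i + 1 < T.n) : InjOn Prod.fst (T.edge i) :=
  (LinearMap.fst ℝ ℝ ℝ).toAffineMap.injOn_segment (T.mono i (i + 1) i.lt_succ_self hi).ne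

variable (T)

theorem image_fst_carrier : Prod.fst '' T.carrier = Icc (T.v 0).1 (T.v (T.n - 1)).1 := by
  obtain ⟨m, hm⟩ : ∃ m, T.n - 1 = m + 1 := ⟨T.n - 2, by have := T.hn; omega⟩
  have hmono : MonotoneOn (fun i => (T.v i).1) (Iic (m + 1)) :=
    (T.strictMonoOn_fst_v.mono fun i hi => mem_Iio.2 (by rw [mem_Iic] at hi; omega)).monotoneOn
  rw [carrier, image_iUnion₂, hm, ← biUnion_range_succ_Icc hmono]
  exact iUnion₂_congr fun i hi => image_fst_edge (by rw [Finset.mem_range] at hi; omega)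

theorem injOn_fst_carrier : InjOn Prod.fst T.carrier := by
  -- Edges `e_i`, `e_j` with `i < j` share an `x`-coordinate only if `j = i + 1`, at `v_j`.
  have hedges : ∀ {i j t t'}, i ≤ j → j + 1 < T.n → t ∈ T.edge i → t' ∈ T.edge j →
      t.1 = t'.1 → t = t' := by
    intro i j t t' hij hj ht ht' htt'
    obtain rfl | hij := hij.eq_or_lt
    · exact injOn_fst_edge hj ht ht' htt'
    have hti := (image_fst_edge (i := i) (by omega)).subset (mem_image_of_mem _ ht)
    have htj := (image_fst_edge hj).subset (mem_image_of_mem _ ht')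
    have hle : (T.v (i + 1)).1 ≤ (T.v j).1 :=
      (T.strictMonoOn_fst_v.le_iff_le (mem_Iio.2 (by omega)) (mem_Iio.2 (by omega))).2 hij
    obtain rfl : i + 1 = j :=
      T.strictMonoOn_fst_v.injOn (mem_Iio.2 (by omega)) (mem_Iio.2 (by omega))
        (le_antisymm hle (by linarith [hti.2, htj.1]))
    calc t = T.v (i + 1) := injOn_fst_edge (by omega) ht (right_mem_segment ℝ _ _)
          (le_antisymm hti.2 (by linarith [htj.1]))
      _ = t' := injOn_fst_edge hj (left_mem_segment ℝ _ _) ht'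
          (le_antisymm htj.1 (by linarith [hti.2]))
  intro t ht t' ht' htt'
  simp only [carrier, mem_iUnion, Finset.mem_range, exists_prop] at ht ht'
  obtain ⟨i, hi, ht⟩ := ht
  obtain ⟨j, hj, ht'⟩ := ht'
  rcases le_total i j with hij | hji
  · exact hedges hij (by omega) ht ht' htt'
  · exact (hedges hji (by omega) ht' ht htt'.symm).symm

theorem sees_iff_segment_subset_epigraph {p q : ℝ × ℝ} (hp : p ∈ T.carrier)
    (hq : q ∈ T.carrier) : T.sees p q ↔ segment ℝ p q ⊆ T.epigraph := by
  have hconv : Convex ℝ (Prod.fst '' T.carrier) := T.image_fst_carrier ▸ convex_Icc _ _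
  have hover : ∀ z ∈ segment ℝ p q, ∃ t ∈ T.carrier, t.1 = z.1 := fun z hz =>
    hconv.segment_subset (mem_image_of_mem _ hp) (mem_image_of_mem _ hq)
      (image_fst_segment (𝕜 := ℝ) p q ▸ mem_image_of_mem _ hz)
  refine forall₂_congr fun z hz => ⟨fun hsees => ?_, ?_⟩
  · obtain ⟨t, ht, htz⟩ := hover z hz
    exact ⟨t, ht, htz, hsees t ht htz⟩
  · rintro ⟨t, ht, htz, hle⟩ t' ht' ht'z
    rwa [T.injOn_fst_carrier ht' ht (ht'z.trans htz.symm)]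

end Terrain

/-- The visibility region `V(p)` is a closed subset of `ℝ²`. -/
theorem vis_isClosed (T : Terrain) (p : ℝ × ℝ) (hp : p ∈ T.carrier) :
    IsClosed (T.vis p) := by
  have hvis : T.vis p = T.carrier ∩ {q | segment ℝ p q ⊆ T.epigraph} :=
    ext fun q => and_congr_right fun hq => T.sees_iff_segment_subset_epigraph hp hq
  rw [hvis]
  exact T.isCompact_carrier.isClosed.inter (isClosed_setOf_segment_subset T.isClosed_epigraph p)
end
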